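/- Let u : ℍ → ℝ be bounded, continuous, and h-quasiconvex in ℍ, and for δ > 0 define the sup-convolution u^δ(p) = sup{u(q) : d̃_H(p,q) < δ}. Then u^δ is h-quasiconvex in ℍ. -/

import Mathlib

noncomputable section

/-- The underlying space of the first Heisenberg group: `ℝ³`. -/
abbrev Heis := ℝ × ℝ × ℝ

/-- Heisenberg group multiplication. -/
def hmul (p q : Heis) : Heis :=
  (p.1 + q.1, p.2.1 + q.2.1, p.2.2 + q.2.2 + (p.1 * q.2.1 - q.1 * p.2.1) / 2)

/-- Heisenberg group inverse. -/
def hinv (p : Heis) : Heis := (-p.1, -p.2.1, -p.2.2)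

/-- The horizontal plane `ℍ_p = p · ℍ₀` through `p`. -/
def hplane (p : Heis) : Set Heis := {q | ∃ h : Heis, h.2.2 = 0 ∧ q = hmul p h}

/-- The (Euclidean) segment `[p,q]`. -/
def hseg (p q : Heis) : Set Heis :=
  {w | ∃ l : ℝ, 0 ≤ l ∧ l ≤ 1 ∧ w = (1 - l) • p + l • q}

/-- The half-open segment `(p,q]`. -/
def hsegHalfOpen (p q : Heis) : Set Heis :=
  {w | ∃ l : ℝ, 0 < l ∧ l ≤ 1 ∧ w = (1 - l) • p + l • q}

/-- A set `E ⊆ ℍ` is h-convex if for every `p ∈ E` and `q ∈ ℍ_p ∩ E`,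
the horizontal segment `[p,q]` lies in `E`. -/
def IsHConvex (E : Set Heis) : Prop :=
  ∀ p ∈ E, ∀ q ∈ hplane p, q ∈ E → ∀ w ∈ hseg p q, w ∈ E

/-- A set `E` is h-convex up to boundary if for every `p ∈ ∂E` and `q ∈ ℍ_p ∩ E`,
the half-open segment `(p,q]` lies in `E`. -/
def IsHConvexUpToBoundary (E : Set Heis) : Prop :=
  ∀ p ∈ frontier E, ∀ q ∈ hplane p, q ∈ E → ∀ w ∈ hsegHalfOpen p q, w ∈ E

/-- A function `u` is h-quasiconvex on `Ω` if `u(w) ≤ max (u p) (u q)` for all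
`p ∈ Ω`, `q ∈ ℍ_p ∩ Ω` and `w ∈ [p,q]`. -/
def IsHQuasiconvexOn (Ω : Set Heis) (u : Heis → ℝ) : Prop :=
  ∀ p ∈ Ω, ∀ q ∈ hplane p, q ∈ Ω → ∀ w ∈ hseg p q, u w ≤ max (u p) (u q)

/-- `Qf` is the h-quasiconvex envelope of `f` on `Ω`: the greatest h-quasiconvex
function majorized by `f` on `Ω` (equivalently, the pointwise supremum of all
h-quasiconvex minorants of `f`). -/
def IsHQCEnvelopeOn (Ω : Set Heis) (f Qf : Heis → ℝ) : Prop :=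
  IsHQuasiconvexOn Ω Qf ∧ (∀ p ∈ Ω, Qf p ≤ f p) ∧
    ∀ g : Heis → ℝ, IsHQuasiconvexOn Ω g → (∀ p ∈ Ω, g p ≤ f p) → ∀ p ∈ Ω, g p ≤ Qf p

/-- The Korányi gauge. -/
def kGauge (p : Heis) : ℝ := ((p.1 ^ 2 + p.2.1 ^ 2) ^ 2 + 16 * p.2.2 ^ 2) ^ ((1 : ℝ) / 4)

/-- The left-invariant gauge metric `d_H(p,q) = |p⁻¹ · q|_G`. -/
def dLeft (p q : Heis) : ℝ := kGauge (hmul (hinv p) q)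

/-- The right-invariant gauge metric `d̃_H(p,q) = |p · q⁻¹|_G`. -/
def dRight (p q : Heis) : ℝ := kGauge (hmul p (hinv q))

/-- The gauge ball `B_r(p) = {q : |p⁻¹ · q|_G < r}`. -/
def gball (p : Heis) (r : ℝ) : Set Heis := {q | dLeft p q < r}

/-- The horizontal gradient `∇_H φ(p) = (X₁ φ(p), X₂ φ(p))`, where
`X₁ = ∂_x − (y/2) ∂_z` and `X₂ = ∂_y + (x/2) ∂_z`. -/
def hGrad (φ : Heis → ℝ) (p : Heis) : ℝ × ℝ :=
  (fderiv ℝ φ p ((1, 0, -p.2.1 / 2) : Heis), fderiv ℝ φ p ((0, 1, p.1 / 2) : Heis))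

/-- The pairing `⟨∇_H φ(p), (p⁻¹ · ξ)_h⟩`. -/
def hpair (φ : Heis → ℝ) (p ξ : Heis) : ℝ :=
  (hGrad φ p).1 * (hmul (hinv p) ξ).1 + (hGrad φ p).2 * (hmul (hinv p) ξ).2.1

/-- Local boundedness of `u` on `A`. -/
def LocBddOn (A : Set Heis) (u : Heis → ℝ) : Prop :=
  ∀ p ∈ A, ∃ s ∈ nhds p, ∃ C : ℝ, ∀ q ∈ s ∩ A, |u q| ≤ C

/-- `u` is a viscosity subsolution of `u + H(p, u, ∇_H u) = f` in `Ω`, where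
`H(p, u, ∇_H u) = sup {⟨∇_H u(p), (p⁻¹·ξ)_h⟩ : ξ ∈ ℍ_p ∩ Ω, u(ξ) < u(p)}`
(with the supremum understood to be `0` when `∇_H φ(p) = 0`). -/
def IsSubSoln (Ω : Set Heis) (f u : Heis → ℝ) : Prop :=
  UpperSemicontinuousOn u Ω ∧ LocBddOn Ω u ∧
    ∀ p ∈ Ω, ∀ φ : Heis → ℝ, ContDiff ℝ 1 φ →
      IsMaxOn (fun q => u q - φ q) Ω p →
        (∀ ξ ∈ hplane p, ξ ∈ Ω → u ξ < u p → u p + hpair φ p ξ ≤ f p) ∧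
        (hGrad φ p = 0 → u p ≤ f p)

/-- `u` is a viscosity supersolution of `u + H(p, u, ∇_H u) = f` in `Ω`, where for
supersolutions `H(p, u, ∇_H u) = sup {⟨∇_H u(p), (p⁻¹·ξ)_h⟩ : ξ ∈ ℍ_p ∩ Ω, u(ξ) ≤ u(p)}`.
(The set `Ŝ_p(u)` always contains `p` itself, so the inequality
`u(p) + sup ≥ f(p)` is expressed in ε-form.) -/
def IsSuperSoln (Ω : Set Heis) (f u : Heis → ℝ) : Prop :=
  LowerSemicontinuousOn u Ω ∧ LocBddOn Ω u ∧
    ∀ p ∈ Ω, ∀ φ : Heis → ℝ, ContDiff ℝ 1 φ →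
      IsMinOn (fun q => u q - φ q) Ω p →
        ∀ ε > 0, ∃ ξ ∈ hplane p, ξ ∈ Ω ∧ u ξ ≤ u p ∧ f p - ε ≤ u p + hpair φ p ξ

/-- `w` is the upper semicontinuous envelope of `v` on `A`: the smallest
upper semicontinuous function on `A` that majorizes `v`. -/
def IsUscEnvOn (A : Set Heis) (v w : Heis → ℝ) : Prop :=
  UpperSemicontinuousOn w A ∧ (∀ q ∈ A, v q ≤ w q) ∧
    ∀ z : Heis → ℝ, UpperSemicontinuousOn z A → (∀ q ∈ A, v q ≤ z q) → ∀ q ∈ A, w q ≤ z q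

/-- `w` is the lower semicontinuous envelope of `v` on `A`: the largest
lower semicontinuous function on `A` minorized by `v`. -/
def IsLscEnvOn (A : Set Heis) (v w : Heis → ℝ) : Prop :=
  LowerSemicontinuousOn w A ∧ (∀ q ∈ A, w q ≤ v q) ∧
    ∀ z : Heis → ℝ, LowerSemicontinuousOn z A → (∀ q ∈ A, z q ≤ v q) → ∀ q ∈ A, z q ≤ w q

/-- The h-convex hull of `E`: the intersection of all h-convex sets containing `E`. -/
def hconvexHull (E : Set Heis) : Set Heis := ⋂₀ {D : Set Heis | IsHConvex D ∧ E ⊆ D}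

/-- The direct convexification operator
`T[f](w) = inf {max (f p) (f q) : w ∈ [p,q], p ∈ Ω, q ∈ Ω ∩ ℍ_p}`. -/
def Tconv (Ω : Set Heis) (f : Heis → ℝ) : Heis → ℝ := fun w =>
  sInf {y | ∃ p ∈ Ω, ∃ q ∈ hplane p, q ∈ Ω ∧ w ∈ hseg p q ∧ y = max (f p) (f q)}

/- Left translations `p ↦ g · p` are affine maps of `ℝ³` that carry horizontal planes to horizontal
planes, so they preserve h-quasiconvexity. Since `d̃_H(p, g · p) = |g|_G`, the sup-convolution is
`u^δ(p) = sup {u(g · p) : |g|_G < δ}`, a supremum of h-quasiconvex functions. -/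

lemma hmul_assoc (a b c : Heis) : hmul (hmul a b) c = hmul a (hmul b c) := by
  simp only [hmul, Prod.ext_iff]
  exact ⟨by ring, by ring, by ring⟩

lemma hmul_hinv_cancel_right (g p : Heis) : hmul (hmul g (hinv p)) p = g := by
  simp only [hmul, hinv, Prod.ext_iff]
  exact ⟨by ring, by ring, by ring⟩

lemma hmul_hinv_hmul_eq_hinv (g p : Heis) : hmul p (hinv (hmul g p)) = hinv g := by
  simp only [hmul, hinv, Prod.ext_iff]
  exact ⟨by ring, by ring, by ring⟩

lemma hmul_lineMap (g p q : Heis) (l : ℝ) :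
    hmul g ((1 - l) • p + l • q) = (1 - l) • hmul g p + l • hmul g q := by
  simp only [hmul, Prod.ext_iff, Prod.smul_def, smul_eq_mul, Prod.fst_add, Prod.snd_add]
  exact ⟨by ring, by ring, by ring⟩

lemma kGauge_hinv (g : Heis) : kGauge (hinv g) = kGauge g := by
  simp only [kGauge, hinv, neg_sq]

lemma dRight_hmul_self (g p : Heis) : dRight p (hmul g p) = kGauge g := by
  rw [dRight, hmul_hinv_hmul_eq_hinv, kGauge_hinv]

lemma hmul_mem_hplane {p q : Heis} (g : Heis) (hq : q ∈ hplane p) :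
    hmul g q ∈ hplane (hmul g p) := by
  obtain ⟨h, hh, rfl⟩ := hq
  exact ⟨h, hh, (hmul_assoc g p h).symm⟩

lemma hmul_mem_hseg {p q w : Heis} (g : Heis) (hw : w ∈ hseg p q) :
    hmul g w ∈ hseg (hmul g p) (hmul g q) := by
  obtain ⟨l, hl0, hl1, rfl⟩ := hw
  exact ⟨l, hl0, hl1, hmul_lineMap g p q l⟩

lemma IsHQuasiconvexOn.comp_hmul {Ω : Set Heis} {u : Heis → ℝ} (hu : IsHQuasiconvexOn Ω u)
    (g : Heis) : IsHQuasiconvexOn (hmul g ⁻¹' Ω) (fun p => u (hmul g p)) :=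
  fun _ hp _ hq hqΩ _ hw => hu _ hp _ (hmul_mem_hplane g hq) hqΩ _ (hmul_mem_hseg g hw)

lemma IsHQuasiconvexOn.ciSup {ι : Type*} [Nonempty ι] {Ω : Set Heis} {f : ι → Heis → ℝ}
    (hf : ∀ i, IsHQuasiconvexOn Ω (f i)) (hbdd : ∀ p ∈ Ω, BddAbove (Set.range fun i => f i p)) :
    IsHQuasiconvexOn Ω (fun p => ⨆ i, f i p) := by
  intro p hp q hq hqΩ w hw
  refine ciSup_le fun i => (hf i p hp q hq hqΩ w hw).trans ?_
  exact max_le_max (le_ciSup (hbdd p hp) i) (le_ciSup (hbdd q hqΩ) i)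

lemma setOf_dRight_lt_eq_range (u : Heis → ℝ) (δ : ℝ) (p : Heis) :
    {y : ℝ | ∃ q : Heis, dRight p q < δ ∧ y = u q} =
      Set.range fun g : {g : Heis // kGauge g < δ} => u (hmul g p) := by
  ext y
  constructor
  · rintro ⟨q, hq, rfl⟩
    refine ⟨⟨hmul q (hinv p), ?_⟩, by simp only [hmul_hinv_cancel_right]⟩
    rwa [← dRight_hmul_self, hmul_hinv_cancel_right]
  · rintro ⟨g, rfl⟩
    exact ⟨hmul g p, by rw [dRight_hmul_self]; exact g.2, rfl⟩

theorem sup_convolution_hquasiconvex_general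
    (u : Heis → ℝ) (hub : ∃ C : ℝ, ∀ p : Heis, |u p| ≤ C)
    (hu : IsHQuasiconvexOn Set.univ u)
    (δ : ℝ) (hδ : 0 < δ) :
    IsHQuasiconvexOn Set.univ
      (fun p => sSup {y : ℝ | ∃ q : Heis, dRight p q < δ ∧ y = u q}) := by
  obtain ⟨C, hC⟩ := hub
  have : Nonempty {g : Heis // kGauge g < δ} := ⟨⟨0, by simpa [kGauge] using hδ⟩⟩
  simp only [setOf_dRight_lt_eq_range]
  refine IsHQuasiconvexOn.ciSup (fun g => hu.comp_hmul g) fun p _ => ⟨C, ?_⟩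
  rintro _ ⟨g, rfl⟩
  exact (le_abs_self _).trans (hC _)

/-- Lemma 5.5 (H-quasiconvexity preserving by sup-convolution): if `u` is
bounded, continuous and h-quasiconvex in `ℍ`, then for any `δ > 0` the
sup-convolution `u^δ(p) = sup {u(q) : d̃_H(p,q) < δ}` is h-quasiconvex in `ℍ`. -/
theorem sup_convolution_hquasiconvex
    (u : Heis → ℝ) (hub : ∃ C : ℝ, ∀ p : Heis, |u p| ≤ C)
    (huc : Continuous u) (hu : IsHQuasiconvexOn Set.univ u)
    (δ : ℝ) (hδ : 0 < δ) :
    IsHQuasiconvexOn Set.univ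
      (fun p => sSup {y : ℝ | ∃ q : Heis, dRight p q < δ ∧ y = u q}) :=
  sup_convolution_hquasiconvex_general u hub hu δ hδ
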